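/- arXiv:1905.02516 — 2 statements merged into one kernel-verified Lean document; each statement's English description precedes it below -/
import Mathlib

section
/- Let (a_n)_{n≥1} be a sequence of positive reals and suppose there exist constants 0 < c₁ ≤ c₂, s > 1/2 and α ∈ ℝ with c₁·n^{−s}·log^{α}(n) ≤ a_n ≤ c₂·n^{−s}·log^{α}(n) for all n ≥ 2. Then the sequence β_k = ((1/k)·Σ_{j ≥ k} a_j²)^{1/2} is finite for all k and satisfies β_k ≍ a_k, i.e., there are constants 0 < c ≤ C with c·a_k ≤ β_k ≤ C·a_k for all k ≥ 2. -/
/-- For a sequence of positive reals, `β_k = ((1/k) · ∑_{j ≥ k} a_j²)^{1/2}`. -/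
noncomputable def betaSeq (a : ℕ → ℝ) (k : ℕ) : ℝ :=
  Real.sqrt ((1 / (k : ℝ)) * ∑' j : ℕ, a (k + j) ^ 2)

/-!
Write `g(x) = x^{-s} log^α x`. Since `log^α` grows slower than any power, for every `r < s` the
sequence `g` is, up to a constant factor, bounded by the envelope `g(k) (j/k)^{-r}` for `j ≥ k ≥ 2`.
Choosing `1/2 < r < s`, the tail `∑_{j ≥ k} g(j)²` is at most `g(k)² k^{2r} ∑_{j ≥ k} j^{-2r}`,
which is `O(k g(k)²)` by the integral test. Conversely `g(j) ≳ g(k)` for `k ≤ j < 2k`, and these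
`k` terms already contribute `≳ k g(k)²`. Hence `β_k ≍ g(k) ≍ a_k`.
-/

open Real

lemma one_add_rpow_le_mul_exp {β ε : ℝ} (hβ : 0 ≤ β) (hε : 0 < ε) :
    ∃ M > 0, ∀ v : ℝ, 0 ≤ v → (1 + v) ^ β ≤ M * exp (ε * v) := by
  set m := max 1 (β / ε)
  have hm : 0 < m := one_pos.trans_le (le_max_left _ _)
  have hβm : β / m ≤ ε := by
    rw [div_le_iff₀ hm, mul_comm, ← div_le_iff₀ hε]; exact le_max_right _ _
  refine ⟨m ^ β, rpow_pos_of_pos hm β, fun v hv => ?_⟩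
  have hlin : 1 + v ≤ m * exp (v / m) := calc
    1 + v ≤ m * (v / m + 1) := by
      rw [mul_add, mul_div_cancel₀ _ hm.ne', mul_one]; linarith [le_max_left 1 (β / ε)]
    _ ≤ m * exp (v / m) := by gcongr; exact add_one_le_exp _
  calc (1 + v) ^ β ≤ (m * exp (v / m)) ^ β := rpow_le_rpow (by linarith) hlin hβ
    _ = m ^ β * exp (β / m * v) := by
      rw [mul_rpow hm.le (exp_pos _).le, ← exp_mul]; ring_nf
    _ ≤ m ^ β * exp (ε * v) := by gcongr

lemma exists_log_rpow_le_mul_rpow (α : ℝ) {δ : ℝ} (hδ : 0 < δ) :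
    ∃ M > 0, ∀ x y : ℝ, 2 ≤ x → x ≤ y → log y ^ α ≤ M * log x ^ α * (y / x) ^ δ := by
  rcases le_or_gt α 0 with hα | hα
  · refine ⟨1, one_pos, fun x y hx hxy => ?_⟩
    have hlx : 0 < log x := log_pos (by linarith)
    calc log y ^ α ≤ log x ^ α :=
          rpow_le_rpow_of_nonpos hlx (log_le_log (by linarith) hxy) hα
      _ ≤ 1 * log x ^ α * (y / x) ^ δ := by
          rw [one_mul]
          exact le_mul_of_one_le_right (rpow_nonneg hlx.le _)
            (one_le_rpow ((one_le_div (by linarith)).2 hxy) hδ.le)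
  · have hl2 : 0 < log 2 := log_pos one_lt_two
    obtain ⟨M, hM, hexp⟩ := one_add_rpow_le_mul_exp hα.le (mul_pos hδ hl2)
    refine ⟨M, hM, fun x y hx hxy => ?_⟩
    have hx0 : 0 < x := by linarith
    have hlx : log 2 ≤ log x := log_le_log two_pos hx
    set v := log (y / x) / log 2
    have hv : 0 ≤ v := div_nonneg (log_nonneg ((one_le_div hx0).2 hxy)) hl2.le
    -- `log y = log x + v log 2 ≤ log x (1 + v)` because `log x ≥ log 2`
    have hlog : log y ≤ log x * (1 + v) := by
      have hsplit : log y = log x + v * log 2 := by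
        rw [div_mul_cancel₀ _ hl2.ne', log_div (by linarith) hx0.ne']; ring
      nlinarith
    calc log y ^ α ≤ (log x * (1 + v)) ^ α :=
          rpow_le_rpow (log_nonneg (by linarith)) hlog hα.le
      _ = log x ^ α * (1 + v) ^ α := mul_rpow (by linarith) (by linarith)
      _ ≤ log x ^ α * (M * exp (δ * log 2 * v)) := by
        gcongr
        exacts [rpow_nonneg (hl2.le.trans hlx) _, hexp v hv]
      _ = M * log x ^ α * (y / x) ^ δ := by
        rw [rpow_def_of_pos (div_pos (by linarith) hx0),
          show δ * log 2 * v = log (y / x) * δ by simp only [v]; field_simp]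
        ring

noncomputable def powLog (s α x : ℝ) : ℝ := x ^ (-s) * log x ^ α

lemma powLog_pos (s α : ℝ) {x : ℝ} (hx : 1 < x) : 0 < powLog s α x :=
  mul_pos (rpow_pos_of_pos (by linarith) _) (rpow_pos_of_pos (log_pos hx) _)

lemma exists_powLog_le_mul_powLog_mul_rpow (α : ℝ) {r s : ℝ} (hrs : r < s) :
    ∃ M > 0, ∀ x y : ℝ, 2 ≤ x → x ≤ y →
      powLog s α y ≤ M * powLog s α x * (y / x) ^ (-r) := by
  obtain ⟨M, hM, hlog⟩ := exists_log_rpow_le_mul_rpow α (sub_pos.2 hrs)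
  refine ⟨M, hM, fun x y hx hxy => ?_⟩
  have hx0 : 0 < x := by linarith
  have hyx : 0 < y / x := div_pos (by linarith) hx0
  calc powLog s α y = (x * (y / x)) ^ (-s) * log y ^ α := by
        rw [mul_div_cancel₀ _ hx0.ne', powLog]
    _ ≤ (x * (y / x)) ^ (-s) * (M * log x ^ α * (y / x) ^ (s - r)) := by
        gcongr; exact hlog x y hx hxy
    _ = M * powLog s α x * (y / x) ^ (-r) := by
        rw [mul_rpow hx0.le hyx.le, powLog, show -r = -s + (s - r) by ring, rpow_add hyx]
        ring

lemma mul_powLog_le_powLog (α : ℝ) {s : ℝ} (hs : 0 ≤ s) {x y : ℝ} (hx : 2 ≤ x) (hxy : x ≤ y)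
    (hyx : y ≤ 2 * x) : 2 ^ (-s) * min 1 (2 ^ α) * powLog s α x ≤ powLog s α y := by
  have hx0 : 0 < x := by linarith
  have hlx : 0 < log x := log_pos (by linarith)
  have hlxy : log x ≤ log y := log_le_log hx0 hxy
  have hly : log y ≤ 2 * log x := calc
    log y ≤ log (2 * x) := log_le_log (by linarith) hyx
    _ = log 2 + log x := log_mul two_ne_zero hx0.ne'
    _ ≤ 2 * log x := by linarith [log_le_log two_pos hx]
  have hpow : 2 ^ (-s) * x ^ (-s) ≤ y ^ (-s) := by
    rw [← mul_rpow zero_le_two hx0.le]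
    exact rpow_le_rpow_of_nonpos (by linarith) hyx (by linarith)
  have hlogpow : min 1 (2 ^ α) * log x ^ α ≤ log y ^ α := by
    rcases le_or_gt 0 α with hα | hα
    · calc min 1 (2 ^ α) * log x ^ α ≤ 1 * log x ^ α := by gcongr; exact min_le_left _ _
        _ ≤ log y ^ α := by rw [one_mul]; exact rpow_le_rpow hlx.le hlxy hα
    · calc min 1 (2 ^ α) * log x ^ α ≤ 2 ^ α * log x ^ α := by gcongr; exact min_le_right _ _
        _ = (2 * log x) ^ α := (mul_rpow zero_le_two hlx.le).symm
        _ ≤ log y ^ α := rpow_le_rpow_of_nonpos (hlx.trans_le hlxy) hly hα.le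
  calc 2 ^ (-s) * min 1 (2 ^ α) * powLog s α x
      = (2 ^ (-s) * x ^ (-s)) * (min 1 (2 ^ α) * log x ^ α) := by rw [powLog]; ring
    _ ≤ y ^ (-s) * log y ^ α := by
      gcongr
      exact rpow_nonneg (by linarith) _

lemma summable_comp_add_iff {f : ℕ → ℝ} (k : ℕ) :
    (Summable fun j => f (k + j)) ↔ Summable f := by
  simpa only [Nat.add_comm k] using summable_nat_add_iff k

lemma summable_natCast_add_rpow_neg {q : ℝ} (hq : 1 < q) (k : ℕ) :
    Summable fun j : ℕ => ((k + j : ℕ) : ℝ) ^ (-q) :=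
  (summable_comp_add_iff (f := fun n : ℕ => (n : ℝ) ^ (-q)) k).2
    (Real.summable_nat_rpow.2 (by linarith))

lemma tsum_natCast_add_rpow_neg_le {q : ℝ} (hq : 1 < q) {k : ℕ} (hk : 0 < k) :
    ∑' j : ℕ, ((k + j : ℕ) : ℝ) ^ (-q) ≤ q / (q - 1) * (k : ℝ) ^ (1 - q) := by
  have hk' : (0 : ℝ) < k := by exact_mod_cast hk
  have hk1 : (1 : ℝ) ≤ k := by exact_mod_cast hk
  have htail : ∑' j : ℕ, ((k + (j + 1) : ℕ) : ℝ) ^ (-q) ≤ (k : ℝ) ^ (1 - q) / (q - 1) := by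
    have h := AntitoneOn.tsum_comp_add_le_integral (f := fun t : ℝ => t ^ (-q)) k
      ((antitoneOn_rpow_Ioi_of_exponent_nonpos (by linarith)).mono
        fun t ht => hk'.trans_le ht)
      (integrableOn_Ioi_rpow_of_lt (by linarith) hk')
      (fun t ht => rpow_nonneg (hk'.le.trans ht.le) _)
    rw [integral_Ioi_rpow_of_lt (by linarith) hk'] at h
    convert h using 1
    · exact tsum_congr fun j => by push_cast; ring_nf
    · rw [show -q + 1 = 1 - q by ring, neg_div, ← div_neg, neg_sub]
  have hfirst : (k : ℝ) ^ (-q) ≤ (k : ℝ) ^ (1 - q) :=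
    rpow_le_rpow_of_exponent_le hk1 (by linarith)
  rw [(summable_natCast_add_rpow_neg hq k).tsum_eq_zero_add]
  calc ((k + 0 : ℕ) : ℝ) ^ (-q) + ∑' j : ℕ, ((k + (j + 1) : ℕ) : ℝ) ^ (-q)
      ≤ (k : ℝ) ^ (1 - q) + (k : ℝ) ^ (1 - q) / (q - 1) := by
        simpa only [Nat.add_zero] using add_le_add hfirst htail
    _ = q / (q - 1) * (k : ℝ) ^ (1 - q) := by
        field_simp [show q - 1 ≠ 0 by linarith]; ring

lemma le_betaSeq_of_le {b : ℕ → ℝ} {k : ℕ} (hk : 0 < k) {c : ℝ} (hc : 0 ≤ c)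
    (hS : Summable fun j => b (k + j) ^ 2) (hb : ∀ j < k, c ≤ b (k + j)) :
    c ≤ betaSeq b k := by
  have hk' : (0 : ℝ) < k := by exact_mod_cast hk
  have hblock : k * c ^ 2 ≤ ∑' j, b (k + j) ^ 2 := calc
    k * c ^ 2 = ∑ j ∈ Finset.range k, c ^ 2 := by simp
    _ ≤ ∑ j ∈ Finset.range k, b (k + j) ^ 2 :=
      Finset.sum_le_sum fun j hj => pow_le_pow_left₀ hc (hb j (Finset.mem_range.1 hj)) 2
    _ ≤ ∑' j, b (k + j) ^ 2 := hS.sum_le_tsum _ fun j _ => sq_nonneg _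
  refine le_sqrt_of_sq_le ?_
  rw [one_div, le_inv_mul_iff₀ hk']
  exact hblock

lemma betaSeq_le_of_le_mul_rpow {b : ℕ → ℝ} {k : ℕ} (hk : 0 < k) {r B : ℝ} (hr : 1 / 2 < r)
    (hb0 : ∀ j, 0 ≤ b (k + j)) (hb : ∀ j, b (k + j) ≤ B * (((k + j : ℕ) : ℝ) / k) ^ (-r)) :
    (Summable fun j => b (k + j) ^ 2) ∧ betaSeq b k ≤ √(2 * r / (2 * r - 1)) * B := by
  have hk' : (0 : ℝ) < k := by exact_mod_cast hk
  have hq : 1 < 2 * r := by linarith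
  have hB : 0 ≤ B := by simpa [hk'.ne'] using (hb0 0).trans (hb 0)
  have hsq : ∀ j, b (k + j) ^ 2 ≤ B ^ 2 * (k : ℝ) ^ (2 * r) * ((k + j : ℕ) : ℝ) ^ (-(2 * r)) := by
    intro j
    have hn : (0 : ℝ) ≤ ((k + j : ℕ) : ℝ) := Nat.cast_nonneg _
    calc b (k + j) ^ 2 ≤ (B * (((k + j : ℕ) : ℝ) / k) ^ (-r)) ^ 2 :=
          pow_le_pow_left₀ (hb0 j) (hb j) 2
      _ = B ^ 2 * (k : ℝ) ^ (2 * r) * ((k + j : ℕ) : ℝ) ^ (-(2 * r)) := by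
          rw [mul_pow, ← rpow_mul_natCast (div_nonneg hn hk'.le), div_rpow hn hk'.le,
            show -r * ((2 : ℕ) : ℝ) = -(2 * r) by push_cast; ring, rpow_neg hk'.le]
          field_simp
  have hS : Summable fun j => b (k + j) ^ 2 :=
    .of_nonneg_of_le (fun j => sq_nonneg _) hsq
      ((summable_natCast_add_rpow_neg hq k).mul_left _)
  refine ⟨hS, ?_⟩
  have htsum : ∑' j, b (k + j) ^ 2 ≤ k * (√(2 * r / (2 * r - 1)) * B) ^ 2 := calc
    ∑' j, b (k + j) ^ 2 ≤ B ^ 2 * (k : ℝ) ^ (2 * r) * ∑' j : ℕ, ((k + j : ℕ) : ℝ) ^ (-(2 * r)) := by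
        rw [← tsum_mul_left]
        exact hS.tsum_le_tsum hsq ((summable_natCast_add_rpow_neg hq k).mul_left _)
    _ ≤ B ^ 2 * (k : ℝ) ^ (2 * r) * (2 * r / (2 * r - 1) * (k : ℝ) ^ (1 - 2 * r)) := by
        gcongr; exact tsum_natCast_add_rpow_neg_le hq hk
    _ = k * (√(2 * r / (2 * r - 1)) * B) ^ 2 := by
        rw [mul_pow, sq_sqrt (div_nonneg (by linarith) (by linarith)), mul_left_comm _ (_ / _),
          mul_assoc, ← rpow_add hk', add_sub_cancel, rpow_one]; ring
  rw [betaSeq, sqrt_le_left (by positivity), one_div, inv_mul_le_iff₀ hk']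
  exact htsum

lemma exists_betaSeq_asymp_powLog {a : ℕ → ℝ} {c₁ c₂ s α : ℝ} (hc₁ : 0 < c₁) (hc₂ : 0 ≤ c₂)
    (hs : 1 / 2 < s) (hlow : ∀ n : ℕ, 2 ≤ n → c₁ * powLog s α n ≤ a n)
    (hupp : ∀ n : ℕ, 2 ≤ n → a n ≤ c₂ * powLog s α n) :
    ∃ c C : ℝ, 0 < c ∧ 0 ≤ C ∧ ∀ k : ℕ, 2 ≤ k → (Summable fun j => a (k + j) ^ 2) ∧
      c * powLog s α k ≤ betaSeq a k ∧ betaSeq a k ≤ C * powLog s α k := by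
  -- any `r ∈ (1/2, s)` works
  set r := (2 * s + 1) / 4 with hr
  obtain ⟨M, hM, hdecay⟩ := exists_powLog_le_mul_powLog_mul_rpow α (show r < s by linarith)
  set c₀ : ℝ := 2 ^ (-s) * min 1 (2 ^ α)
  have hc₀ : 0 < c₀ := by positivity
  refine ⟨c₁ * c₀, √(2 * r / (2 * r - 1)) * (c₂ * M), by positivity, by positivity,
    fun k hk => ?_⟩
  have hk2 : (2 : ℝ) ≤ k := by exact_mod_cast hk
  have hgk : 0 < powLog s α k := powLog_pos s α (by linarith)
  have hupper := betaSeq_le_of_le_mul_rpow (b := a) (k := k) (by omega)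
    (B := c₂ * M * powLog s α k) (show 1 / 2 < r by linarith)
    (fun j => (mul_nonneg hc₁.le (powLog_pos s α (by push_cast; linarith)).le).trans
      (hlow _ (by omega)))
    (fun j => (hupp _ (by omega)).trans (by
      rw [mul_assoc c₂ M, mul_assoc c₂]
      gcongr
      exact hdecay _ _ hk2 (by push_cast; linarith)))
  refine ⟨hupper.1, le_betaSeq_of_le (by omega) (by positivity) hupper.1 fun j hj => ?_,
    hupper.2.trans_eq (by ring)⟩
  have hjk : (j : ℝ) ≤ k := by exact_mod_cast hj.le
  calc c₁ * c₀ * powLog s α k ≤ c₁ * powLog s α (k + j : ℕ) := by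
        rw [mul_assoc]
        gcongr
        exact mul_powLog_le_powLog α (y := (k + j : ℕ)) (by linarith) hk2 (by push_cast; linarith)
          (by push_cast; linarith)
    _ ≤ a (k + j) := hlow _ (by omega)

theorem beta_asymp_of_superhalf_general (a : ℕ → ℝ)
    (c₁ c₂ s α : ℝ) (hc₁ : 0 < c₁) (hs : 1 / 2 < s)
    (hlow : ∀ n : ℕ, 2 ≤ n → c₁ * (n : ℝ) ^ (-s) * Real.log n ^ α ≤ a n)
    (hupp : ∀ n : ℕ, 2 ≤ n → a n ≤ c₂ * (n : ℝ) ^ (-s) * Real.log n ^ α) :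
    (∀ k : ℕ, Summable fun j : ℕ => a (k + j) ^ 2) ∧
      ∃ c C : ℝ, 0 < c ∧ c ≤ C ∧ ∀ k : ℕ, 2 ≤ k →
        c * a k ≤ betaSeq a k ∧ betaSeq a k ≤ C * a k := by
  have hlow' : ∀ n : ℕ, 2 ≤ n → c₁ * powLog s α n ≤ a n := fun n hn => by
    simpa only [powLog, mul_assoc] using hlow n hn
  have hupp' : ∀ n : ℕ, 2 ≤ n → a n ≤ c₂ * powLog s α n := fun n hn => by
    simpa only [powLog, mul_assoc] using hupp n hn
  have hg2 : 0 < powLog s α (2 : ℕ) := powLog_pos s α (by norm_num)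
  have hc₂ : 0 < c₂ := hc₁.trans_le <|
    le_of_mul_le_mul_right ((hlow' 2 le_rfl).trans (hupp' 2 le_rfl)) hg2
  obtain ⟨c, C, hc, hC, hbeta⟩ := exists_betaSeq_asymp_powLog hc₁ hc₂.le hs hlow' hupp'
  have hbounds : ∀ k : ℕ, 2 ≤ k → c / c₂ * a k ≤ betaSeq a k ∧ betaSeq a k ≤ C / c₁ * a k := by
    intro k hk
    obtain ⟨-, hlo, hhi⟩ := hbeta k hk
    constructor
    · calc c / c₂ * a k ≤ c / c₂ * (c₂ * powLog s α k) := by gcongr; exact hupp' k hk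
        _ = c * powLog s α k := by field_simp
        _ ≤ betaSeq a k := hlo
    · calc betaSeq a k ≤ C * powLog s α k := hhi
        _ = C / c₁ * (c₁ * powLog s α k) := by field_simp
        _ ≤ C / c₁ * a k := by gcongr; exact hlow' k hk
  have hsum : Summable fun n => a n ^ 2 :=
    (summable_comp_add_iff (f := fun n => a n ^ 2) 2).1 (hbeta 2 le_rfl).1
  refine ⟨fun k => (summable_comp_add_iff (f := fun n => a n ^ 2) k).2 hsum,
    c / c₂, C / c₁, div_pos hc hc₂, ?_, hbounds⟩
  have ha2 : 0 < a 2 := (mul_pos hc₁ hg2).trans_le (hlow' 2 le_rfl)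
  exact le_of_mul_le_mul_right ((hbounds 2 le_rfl).1.trans (hbounds 2 le_rfl).2) ha2

/-- **Lemma (case `s > 1/2`).** If `a_n ≍ n^{-s} log^α n` with `s > 1/2`, then the tail sums
`∑_{j ≥ k} a_j²` are finite and `β_k ≍ a_k`. -/
theorem beta_asymp_of_superhalf (a : ℕ → ℝ) (hpos : ∀ n, 1 ≤ n → 0 < a n)
    (c₁ c₂ s α : ℝ) (hc₁ : 0 < c₁) (hc : c₁ ≤ c₂) (hs : 1 / 2 < s)
    (hlow : ∀ n : ℕ, 2 ≤ n → c₁ * (n : ℝ) ^ (-s) * Real.log n ^ α ≤ a n)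
    (hupp : ∀ n : ℕ, 2 ≤ n → a n ≤ c₂ * (n : ℝ) ^ (-s) * Real.log n ^ α) :
    (∀ k : ℕ, Summable fun j : ℕ => a (k + j) ^ 2) ∧
      ∃ c C : ℝ, 0 < c ∧ c ≤ C ∧ ∀ k : ℕ, 2 ≤ k →
        c * a k ≤ betaSeq a k ∧ betaSeq a k ≤ C * a k :=
  beta_asymp_of_superhalf_general a c₁ c₂ s α hc₁ hs hlow hupp
end

section
/- Let (a_n)_{n≥1} be a sequence of positive reals and suppose there exist constants 0 < c₁ ≤ c₂ and α < −1/2 with c₁·n^{−1/2}·log^{α}(n) ≤ a_n ≤ c₂·n^{−1/2}·log^{α}(n) for all n ≥ 2. Then the sequence β_k = ((1/k)·Σ_{j ≥ k} a_j²)^{1/2} is finite for all k and satisfies β_k ≍ a_k·√(log k), i.e., there are constants 0 < c ≤ C with c·a_k·√(log k) ≤ β_k ≤ C·a_k·√(log k) for all k ≥ 2. -/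
/-!
With `r = 2α < -1`, the hypothesis says `a_n² ≍ (log n)^r / n`. The function `(log x)^r / x` is
decreasing with primitive `(log x)^(r+1) / (r+1)`, so by the integral test the tail
`∑_{j ≥ k} a_j²` is comparable to `(log k)^(r+1)`. Hence both `β_k²` and `a_k² log k` are
comparable to `(log k)^(r+1) / k`, and so are comparable to each other.
-/

open Real MeasureTheory Set Filter Topology

theorem AntitoneOn.tsum_comp_add_le_add_integral {f : ℝ → ℝ} (N : ℕ)
    (anti : AntitoneOn f (Ici (N : ℝ))) (integrable : IntegrableOn f (Ioi (N : ℝ)))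
    (nonneg : ∀ t ∈ Ioi (N : ℝ), 0 ≤ f t) :
    ∑' n : ℕ, f (n + N : ℕ) ≤ f N + ∫ x in Ioi (N : ℝ), f x := by
  have hs : Summable fun n : ℕ => f (n + N : ℕ) :=
    (summable_nat_add_iff N).mpr (anti.summable_of_integrableOn_Ioi integrable nonneg)
  rw [hs.tsum_eq_zero_add]
  simpa [add_right_comm] using
    add_le_add_left (anti.tsum_comp_add_le_integral N integrable nonneg) (f N)

theorem exists_sqrt_two_sided_of_two_sided {N : ℕ} {x y h : ℕ → ℝ} {A₁ A₂ B₁ B₂ : ℝ}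
    (hA₁ : 0 < A₁) (hB₁ : 0 < B₁) (hh : ∀ k, N ≤ k → 0 < h k)
    (hx : ∀ k, N ≤ k → A₁ * h k ≤ x k ∧ x k ≤ A₂ * h k)
    (hy : ∀ k, N ≤ k → B₁ * h k ≤ y k ∧ y k ≤ B₂ * h k) :
    ∃ c C : ℝ, 0 < c ∧ c ≤ C ∧
      ∀ k, N ≤ k → c * √(y k) ≤ √(x k) ∧ √(x k) ≤ C * √(y k) := by
  have hA : A₁ ≤ A₂ :=
    le_of_mul_le_mul_right ((hx N le_rfl).1.trans (hx N le_rfl).2) (hh N le_rfl)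
  have hB : B₁ ≤ B₂ :=
    le_of_mul_le_mul_right ((hy N le_rfl).1.trans (hy N le_rfl).2) (hh N le_rfl)
  have hB₂ : 0 < B₂ := hB₁.trans_le hB
  have hA₂B₁ : 0 ≤ A₂ / B₁ := div_nonneg (hA₁.le.trans hA) hB₁.le
  refine ⟨√(A₁ / B₂), √(A₂ / B₁), by positivity,
    sqrt_le_sqrt (div_le_div₀ (hA₁.le.trans hA) hA hB₁ hB), fun k hk => ⟨?_, ?_⟩⟩
  · obtain ⟨hx₁, -⟩ := hx k hk
    obtain ⟨-, hy₂⟩ := hy k hk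
    calc √(A₁ / B₂) * √(y k) = √(A₁ / B₂ * y k) := (sqrt_mul (by positivity) _).symm
      _ ≤ √(A₁ / B₂ * (B₂ * h k)) := by gcongr
      _ = √(A₁ * h k) := by field_simp
      _ ≤ √(x k) := sqrt_le_sqrt hx₁
  · obtain ⟨-, hx₂⟩ := hx k hk
    obtain ⟨hy₁, -⟩ := hy k hk
    have hy0 : 0 ≤ y k := (mul_pos hB₁ (hh k hk)).le.trans hy₁
    calc √(x k) ≤ √(A₂ * h k) := sqrt_le_sqrt hx₂
      _ = √(A₂ / B₁ * (B₁ * h k)) := by field_simp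
      _ ≤ √(A₂ / B₁ * y k) := by gcongr
      _ = √(A₂ / B₁) * √(y k) := sqrt_mul hA₂B₁ _

section

variable {r : ℝ}

theorem hasDerivAt_log_rpow_add_one_div (hr : r ≠ -1) {x : ℝ} (hx : 1 < x) :
    HasDerivAt (fun y => log y ^ (r + 1) / (r + 1)) (log x ^ r / x) x := by
  have hr' : r + 1 ≠ 0 := fun h => hr (by linarith)
  refine (((hasDerivAt_log (by linarith)).rpow_const (p := r + 1)
    (Or.inl (log_pos hx).ne')).div_const (r + 1)).congr_deriv ?_
  rw [add_sub_cancel_right]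
  field_simp

theorem antitoneOn_log_rpow_div (hr : r ≤ 0) : AntitoneOn (fun x => log x ^ r / x) (Ioi 1) := by
  intro x hx y _ hxy
  have hx0 : 0 < x := zero_lt_one.trans hx
  have hlx : 0 < log x := log_pos hx
  exact div_le_div₀ (rpow_nonneg hlx.le _)
    (rpow_le_rpow_of_nonpos hlx (log_le_log hx0 hxy) hr) hx0 hxy

theorem log_rpow_div_nonneg (r : ℝ) {x : ℝ} (hx : 1 ≤ x) : 0 ≤ log x ^ r / x :=
  div_nonneg (rpow_nonneg (log_nonneg hx) _) (zero_le_one.trans hx)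

theorem tendsto_log_rpow_atTop_zero (hr : r < 0) :
    Tendsto (fun x => log x ^ r) atTop (𝓝 0) := by
  simpa only [neg_neg, Function.comp_def] using
    (tendsto_rpow_neg_atTop (y := -r) (by linarith)).comp tendsto_log_atTop

theorem integrableOn_Ioi_log_rpow_div (hr : r < -1) {a : ℝ} (ha : 1 < a) :
    IntegrableOn (fun x => log x ^ r / x) (Ioi a) :=
  integrableOn_Ioi_deriv_of_nonneg'
    (fun x hx => hasDerivAt_log_rpow_add_one_div hr.ne (ha.trans_le hx))
    (fun x hx => log_rpow_div_nonneg r (ha.trans hx).le)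
    (by simpa using (tendsto_log_rpow_atTop_zero (r := r + 1) (by linarith)).div_const (r + 1))

theorem integral_Ioi_log_rpow_div (hr : r < -1) {a : ℝ} (ha : 1 < a) :
    ∫ x in Ioi a, log x ^ r / x = log a ^ (r + 1) / -(r + 1) := by
  rw [integral_Ioi_of_hasDerivAt_of_nonneg'
    (fun x hx => hasDerivAt_log_rpow_add_one_div hr.ne (ha.trans_le hx))
    (fun x hx => log_rpow_div_nonneg r (ha.trans hx).le)
    (by simpa using (tendsto_log_rpow_atTop_zero (r := r + 1) (by linarith)).div_const (r + 1)),
    zero_sub, div_neg]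

theorem summable_log_rpow_div (hr : r < -1) : Summable fun n : ℕ => log n ^ r / n :=
  AntitoneOn.summable_of_integrableOn_Ioi (N := 2)
    ((antitoneOn_log_rpow_div (by linarith)).mono (Ici_subset_Ioi.2 (by norm_num)))
    (integrableOn_Ioi_log_rpow_div hr (by norm_num))
    (fun t ht => log_rpow_div_nonneg r (by push_cast at ht; linarith [ht.out]))

theorem log_rpow_div_le {x : ℝ} (hx : 2 ≤ x) :
    log x ^ r / x ≤ log x ^ (r + 1) / log 2 := by
  have hlog : log 2 ≤ log x := log_le_log two_pos hx
  have hlog2 : 0 < log 2 := log_pos one_lt_two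
  have hpow : 0 ≤ log x ^ r := rpow_nonneg (hlog2.le.trans hlog) r
  calc log x ^ r / x ≤ log x ^ r := div_le_self hpow (by linarith)
    _ = log x ^ r * log 2 / log 2 := by field_simp
    _ ≤ log x ^ (r + 1) / log 2 := by
      rw [rpow_add_one (hlog2.trans_le hlog).ne']
      gcongr

theorem tsum_log_rpow_div_bounds (hr : r < -1) {k : ℕ} (hk : 2 ≤ k) :
    log k ^ (r + 1) / -(r + 1) ≤ ∑' n : ℕ, log (n + k : ℕ) ^ r / (n + k : ℕ) ∧
      ∑' n : ℕ, log (n + k : ℕ) ^ r / (n + k : ℕ) ≤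
        (1 / log 2 + 1 / -(r + 1)) * log k ^ (r + 1) := by
  have hk1 : (1 : ℝ) < k := by exact_mod_cast hk
  have anti := (antitoneOn_log_rpow_div (r := r) (by linarith)).mono (Ici_subset_Ioi.2 hk1)
  have nonneg : ∀ t ∈ Ioi (k : ℝ), 0 ≤ log t ^ r / t :=
    fun t ht => log_rpow_div_nonneg r (hk1.trans ht).le
  have hint := integral_Ioi_log_rpow_div hr hk1
  constructor
  · simpa [hint] using anti.integral_le_tsum_comp_add k (summable_log_rpow_div hr) nonneg
  · calc _ ≤ log k ^ r / k + ∫ x in Ioi (k : ℝ), log x ^ r / x :=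
          anti.tsum_comp_add_le_add_integral k (integrableOn_Ioi_log_rpow_div hr hk1) nonneg
      _ ≤ log k ^ (r + 1) / log 2 + log k ^ (r + 1) / -(r + 1) := by
          rw [hint]
          exact add_le_add_left (log_rpow_div_le (by exact_mod_cast hk)) _
      _ = _ := by ring

theorem summable_and_mean_tail_bounds_of_bounds_log_rpow_div {b : ℕ → ℝ} {m M : ℝ}
    (hr : r < -1) (hm : 0 ≤ m) (hM : 0 ≤ M)
    (hb : ∀ n : ℕ, 2 ≤ n → m * (log n ^ r / n) ≤ b n ∧ b n ≤ M * (log n ^ r / n)) :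
    (∀ k, Summable fun j => b (k + j)) ∧ ∀ k : ℕ, 2 ≤ k →
      m / -(r + 1) * (log k ^ (r + 1) / k) ≤ 1 / k * ∑' j, b (k + j) ∧
        1 / k * ∑' j, b (k + j) ≤ M * (1 / log 2 + 1 / -(r + 1)) * (log k ^ (r + 1) / k) := by
  have hg := summable_log_rpow_div hr
  have hb_summable : Summable b := by
    refine (summable_nat_add_iff 2).mp
      ((((summable_nat_add_iff 2).mpr hg).mul_left M).of_nonneg_of_le (fun n => ?_)
        (fun n => (hb (n + 2) (by omega)).2))
    exact (mul_nonneg hm (log_rpow_div_nonneg r (by norm_cast; omega))).trans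
      (hb (n + 2) (by omega)).1
  have hsum : ∀ k, Summable fun j => b (k + j) := fun k =>
    ((summable_nat_add_iff k).mpr hb_summable).congr fun j => by rw [add_comm]
  refine ⟨hsum, fun k hk => ?_⟩
  have hgk : Summable fun n : ℕ => log (n + k : ℕ) ^ r / (n + k : ℕ) :=
    (summable_nat_add_iff k).mpr hg
  obtain ⟨hlow, hupp⟩ := tsum_log_rpow_div_bounds hr hk
  have hbk : Summable fun j => b (j + k) := (summable_nat_add_iff k).mpr hb_summable
  simp_rw [add_comm k, one_div_mul_eq_div, ← mul_div_assoc]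
  refine ⟨div_le_div_of_nonneg_right ?_ k.cast_nonneg,
    div_le_div_of_nonneg_right ?_ k.cast_nonneg⟩
  · calc m / -(r + 1) * log k ^ (r + 1) = m * (log k ^ (r + 1) / -(r + 1)) := by ring
      _ ≤ m * ∑' n : ℕ, log (n + k : ℕ) ^ r / (n + k : ℕ) := by gcongr
      _ = ∑' n : ℕ, m * (log (n + k : ℕ) ^ r / (n + k : ℕ)) := tsum_mul_left.symm
      _ ≤ ∑' j, b (j + k) :=
          Summable.tsum_le_tsum (fun j => (hb _ (by omega)).1) (hgk.mul_left m) hbk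
  · calc ∑' j, b (j + k) ≤ ∑' n : ℕ, M * (log (n + k : ℕ) ^ r / (n + k : ℕ)) :=
          Summable.tsum_le_tsum (fun j => (hb _ (by omega)).2) hbk (hgk.mul_left M)
      _ = M * ∑' n : ℕ, log (n + k : ℕ) ^ r / (n + k : ℕ) := tsum_mul_left
      _ ≤ M * ((1 / log 2 + 1 / -(r + 1)) * log k ^ (r + 1)) := by gcongr
      _ = _ := by ring

theorem mul_log_bounds_of_bounds_log_rpow_div {b m M x : ℝ} (hx : 1 < x)
    (hb : m * (log x ^ r / x) ≤ b ∧ b ≤ M * (log x ^ r / x)) :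
    m * (log x ^ (r + 1) / x) ≤ b * log x ∧ b * log x ≤ M * (log x ^ (r + 1) / x) := by
  have hlog : 0 ≤ log x := log_nonneg hx.le
  have key : log x ^ (r + 1) / x = log x ^ r / x * log x := by
    rw [rpow_add_one (log_pos hx).ne']
    ring
  rw [key, ← mul_assoc, ← mul_assoc]
  exact ⟨mul_le_mul_of_nonneg_right hb.1 hlog, mul_le_mul_of_nonneg_right hb.2 hlog⟩

end

theorem mul_rpow_neg_half_mul_log_rpow_sq (c α : ℝ) {x : ℝ} (hx : 1 ≤ x) :
    (c * x ^ (-(1 / 2) : ℝ) * log x ^ α) ^ 2 = c ^ 2 * (log x ^ (2 * α) / x) := by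
  rw [mul_pow, mul_pow, ← rpow_mul_natCast (by linarith), ← rpow_mul_natCast (log_nonneg hx)]
  norm_num [rpow_neg_one]
  ring_nf

theorem sq_bounds_of_bounds_rpow_neg_half_mul_log_rpow {a : ℕ → ℝ} {c₁ c₂ α : ℝ}
    (hc₁ : 0 < c₁)
    (hlow : ∀ n : ℕ, 2 ≤ n → c₁ * (n : ℝ) ^ (-(1 / 2) : ℝ) * log n ^ α ≤ a n)
    (hupp : ∀ n : ℕ, 2 ≤ n → a n ≤ c₂ * (n : ℝ) ^ (-(1 / 2) : ℝ) * log n ^ α)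
    {n : ℕ} (hn : 2 ≤ n) :
    0 ≤ a n ∧ c₁ ^ 2 * (log n ^ (2 * α) / n) ≤ a n ^ 2 ∧
      a n ^ 2 ≤ c₂ ^ 2 * (log n ^ (2 * α) / n) := by
  have hn1 : (1 : ℝ) ≤ n := by exact_mod_cast (by omega : 1 ≤ n)
  have hlow_nonneg : 0 ≤ c₁ * (n : ℝ) ^ (-(1 / 2) : ℝ) * log n ^ α := by
    have := log_nonneg hn1
    positivity
  have ha := hlow_nonneg.trans (hlow n hn)
  rw [← mul_rpow_neg_half_mul_log_rpow_sq _ _ hn1, ← mul_rpow_neg_half_mul_log_rpow_sq _ _ hn1]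
  exact ⟨ha, pow_le_pow_left₀ hlow_nonneg (hlow n hn) 2, pow_le_pow_left₀ ha (hupp n hn) 2⟩

theorem beta_asymp_of_half_general (a : ℕ → ℝ)
    (c₁ c₂ α : ℝ) (hc₁ : 0 < c₁) (hα : α < -(1 / 2))
    (hlow : ∀ n : ℕ, 2 ≤ n → c₁ * (n : ℝ) ^ (-(1 / 2) : ℝ) * Real.log n ^ α ≤ a n)
    (hupp : ∀ n : ℕ, 2 ≤ n → a n ≤ c₂ * (n : ℝ) ^ (-(1 / 2) : ℝ) * Real.log n ^ α) :
    (∀ k : ℕ, Summable fun j : ℕ => a (k + j) ^ 2) ∧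
      ∃ c C : ℝ, 0 < c ∧ c ≤ C ∧ ∀ k : ℕ, 2 ≤ k →
        c * (a k * Real.sqrt (Real.log k)) ≤ betaSeq a k ∧
          betaSeq a k ≤ C * (a k * Real.sqrt (Real.log k)) := by
  have hsq := fun n (hn : 2 ≤ n) =>
    sq_bounds_of_bounds_rpow_neg_half_mul_log_rpow hc₁ hlow hupp hn
  have hr : 2 * α < -1 := by linarith
  obtain ⟨hsum, hβ_sq⟩ := summable_and_mean_tail_bounds_of_bounds_log_rpow_div hr
    (sq_nonneg c₁) (sq_nonneg c₂) fun n hn => (hsq n hn).2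
  refine ⟨hsum, ?_⟩
  have hk1 : ∀ k : ℕ, 2 ≤ k → (1 : ℝ) < k := fun k hk => by exact_mod_cast hk
  have hp : 0 < -(2 * α + 1) := by linarith
  obtain ⟨c, C, hc, hcC, hbounds⟩ := exists_sqrt_two_sided_of_two_sided (by positivity)
    (pow_pos hc₁ 2) (fun k hk => div_pos (rpow_pos_of_pos (log_pos (hk1 k hk)) _)
      (by linarith [hk1 k hk])) hβ_sq
    fun k hk => mul_log_bounds_of_bounds_log_rpow_div (hk1 k hk) (hsq k hk).2
  refine ⟨c, C, hc, hcC, fun k hk => ?_⟩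
  rw [← sqrt_sq (hsq k hk).1, ← sqrt_mul (sq_nonneg _)]
  exact hbounds k hk

/-- **Lemma (case `s = 1/2`, `α < -1/2`).** If `a_n ≍ n^{-1/2} log^α n` with `α < -1/2`, then
the tail sums `∑_{j ≥ k} a_j²` are finite and `β_k ≍ a_k √(log k)`. -/
theorem beta_asymp_of_half (a : ℕ → ℝ) (hpos : ∀ n, 1 ≤ n → 0 < a n)
    (c₁ c₂ α : ℝ) (hc₁ : 0 < c₁) (hc : c₁ ≤ c₂) (hα : α < -(1 / 2))
    (hlow : ∀ n : ℕ, 2 ≤ n → c₁ * (n : ℝ) ^ (-(1 / 2) : ℝ) * Real.log n ^ α ≤ a n)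
    (hupp : ∀ n : ℕ, 2 ≤ n → a n ≤ c₂ * (n : ℝ) ^ (-(1 / 2) : ℝ) * Real.log n ^ α) :
    (∀ k : ℕ, Summable fun j : ℕ => a (k + j) ^ 2) ∧
      ∃ c C : ℝ, 0 < c ∧ c ≤ C ∧ ∀ k : ℕ, 2 ≤ k →
        c * (a k * Real.sqrt (Real.log k)) ≤ betaSeq a k ∧
          betaSeq a k ≤ C * (a k * Real.sqrt (Real.log k)) :=
  beta_asymp_of_half_general a c₁ c₂ α hc₁ hα hlow hupp
end
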